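/- Let V be the Vámos matroid: the matroid of rank 4 on the ground set {1,2,…,8} whose bases are all 4-element subsets except the five sets {1,2,3,4}, {1,2,5,6}, {3,4,5,6}, {3,4,7,8}, {5,6,7,8}. Then P_V(t) = 1 + 33t. -/

import Mathlib

/-!
Since `2 · deg P_M < rk M`, the Kazhdan–Lusztig polynomial of a matroid of rank at most 4 is
`P_M(0) + P_M(1) t`. The same bound leaves only `S = E` in the top coefficient of
`Z_M = Σ_S t^{rk S} P_{M/S}`, so `Z_M(0) = 1` by palindromicity; as only sets of loops
contribute to `Z_M(0)`, induction on the size of the ground set gives `P_M(0) = 1` when `M` is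
loopless and `0` otherwise. Since `M/S` is loopless exactly when `S` is a flat, the coefficient
of `t^j` in `Z_M` is the number of rank-`j` flats plus contributions of sets of rank `< j`, which
vanish by the degree bound when `j = rk M - 1`. For loopless `M` of rank 3 or 4, palindromicity
of `Z_M` in degrees `1` and `rk M - 1` then reads `P_M(1) + #{points} = #{hyperplanes}`. The
Vámos matroid has 8 points and 41 planes (the five dependent 4-sets and the 36 three-sets lying
in none of them), so `P_V(1) = 33`.
-/

open Polynomial Matroid

namespace KLPaper

variable {α : Type} [Fintype α]

/-- The contraction `M ⧸ C` of a set `C` in a matroid `M`, defined (as is standard,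
see e.g. Oxley, Prop. 3.1.1) as the dual of the deletion of `C` from the dual matroid,
where deletion of `C` is restriction to `M.E \ C`.  Its ground set is `M.E \ C`. -/
noncomputable def contract (M : Matroid α) (C : Set α) : Matroid α :=
  (M✶ ↾ (M.E \ C))✶

scoped infixl:75 " ⧸ " => KLPaper.contract

/-- The rank `rk M S` of a set `S` in a matroid `M`: the largest cardinality of an
independent subset of `S`. -/
noncomputable def rk (M : Matroid α) (S : Set α) : ℕ :=
  sSup {n | ∃ I, I ⊆ S ∧ M.Indep I ∧ I.ncard = n}

/-- The rank of a matroid: the rank of its ground set. -/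
noncomputable def rank (M : Matroid α) : ℕ := rk M M.E

/-- A circuit of a matroid: a minimal dependent set, i.e. a dependent subset of the
ground set all of whose proper subsets are independent. -/
def IsCircuit (M : Matroid α) (C : Set α) : Prop :=
  M.Dep C ∧ ∀ D ⊂ C, M.Indep D

/-- A hyperplane of a matroid: a maximal proper flat. -/
def IsHyperplane (M : Matroid α) (H : Set α) : Prop :=
  M.IsFlat H ∧ H ≠ M.E ∧ ∀ F, M.IsFlat F → H ⊂ F → F = M.E

/-- A stressed hyperplane of a matroid `M` of rank `k`: a hyperplane `H` such that every
`k`-element subset of `H` is a circuit of `M`. -/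
def Stressed (M : Matroid α) (H : Set α) : Prop :=
  IsHyperplane M H ∧ ∀ C ⊆ H, C.ncard = rank M → IsCircuit M C

/-- `Mt` is the relaxation of `M` at the stressed hyperplane `H`: the matroid on the same
ground set whose bases are exactly the bases of `M` together with all `(rank M)`-element
subsets of `H`. -/
def IsRelaxation (M Mt : Matroid α) (H : Set α) : Prop :=
  Mt.E = M.E ∧ ∀ B : Set α, Mt.IsBase B ↔ (M.IsBase B ∨ (B ⊆ H ∧ B.ncard = rank M))

/-- The characterization of the Kazhdan–Lusztig polynomials `P_M` and the `Z`-polynomials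
`Z_M` of matroids (on a fixed finite type): (i) both equal `1` on matroids with empty
ground set; (ii) `2 · deg P_M < rk M` when the ground set is nonempty (the zero
polynomial being allowed); (iii) `Z_M` is palindromic of degree `rk M`;
(iv) `Z_M = Σ_{S ⊆ E} t^{rk S} · P_{M ⧸ S}`, the sum over all subsets `S` of `E`. -/
def PZaxioms (P Z : Matroid α → Polynomial ℤ) : Prop :=
  (∀ M : Matroid α, M.E = ∅ → P M = 1 ∧ Z M = 1) ∧
  (∀ M : Matroid α, M.E ≠ ∅ → (P M = 0 ∨ 2 * (P M).natDegree < rank M)) ∧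
  (∀ M : Matroid α, (Z M).natDegree ≤ rank M ∧
      ∀ i ≤ rank M, (Z M).coeff i = (Z M).coeff (rank M - i)) ∧
  (∀ M : Matroid α,
      Z M = ∑ S ∈ M.E.toFinite.toFinset.powerset,
        X ^ (rk M (S : Set α)) * P (M ⧸ (S : Set α)))

end KLPaper

namespace KLPaper

variable {α : Type} {M : Matroid α} {S T : Set α}

lemma contract_eq_contract (M : Matroid α) (S : Set α) : (M ⧸ S) = M ／ S := rfl

lemma loopless_contract_iff_isFlat (hS : S ⊆ M.E) : (M ⧸ S).Loopless ↔ M.IsFlat S := by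
  rw [loopless_iff, contract_eq_contract, contract_loops_eq, Set.sdiff_eq_empty,
    isFlat_iff_closure_eq, (M.subset_closure S hS).ge_iff_eq']

lemma loopless_contract_iff_loops_subset (hS : S ⊆ M.loops) :
    (M ⧸ S).Loopless ↔ M.loops ⊆ S := by
  rw [loopless_iff, contract_eq_contract, contract_loops_eq, closure_eq_loops_of_subset hS,
    Set.sdiff_eq_empty]

section Rank

variable [Finite α]

lemma cast_rk_eq (M : Matroid α) (T : Set α) : (rk M T : ℕ∞) = M.eRk T := by
  set R := {n | ∃ I, I ⊆ T ∧ M.Indep I ∧ I.ncard = n}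
  have hbdd : BddAbove R := ⟨Nat.card α, by rintro n ⟨I, -, -, rfl⟩; exact Set.ncard_le_card I⟩
  refine le_antisymm ?_ (M.eRk_le_iff.2 fun I hIT hI => ?_)
  · obtain ⟨I, hIT, hI, hIn⟩ : sSup R ∈ R :=
      Nat.sSup_mem ⟨0, ∅, Set.empty_subset T, M.empty_indep, Set.ncard_empty α⟩ hbdd
    rw [rk, ← hIn, (Set.toFinite I).cast_ncard_eq]
    exact hI.encard_le_eRk_of_subset hIT
  · rw [← (Set.toFinite I).cast_ncard_eq]
    exact_mod_cast le_csSup hbdd ⟨I, hIT, hI, rfl⟩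

lemma rk_mono {U : Set α} (h : T ⊆ U) : rk M T ≤ rk M U := by
  have := M.eRk_mono h
  rwa [← cast_rk_eq, ← cast_rk_eq, Nat.cast_le] at this

lemma rk_eq_zero_iff : rk M T = 0 ↔ T ∩ M.E ⊆ M.loops := by
  rw [← Nat.cast_eq_zero (R := ℕ∞), cast_rk_eq, eRk_eq_zero_iff']

@[simp] lemma rk_empty (M : Matroid α) : rk M ∅ = 0 :=
  rk_eq_zero_iff.2 (by simp)

lemma rk_contract_add_rk (hTS : Disjoint T S) : rk (M ⧸ S) T + rk M S = rk M (T ∪ S) := by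
  obtain ⟨J, hJ⟩ := M.exists_isBasis' S
  obtain ⟨K, hK, hJK⟩ :=
    hJ.indep.subset_isBasis'_of_subset (hJ.subset.trans (Set.subset_union_right (s := T)))
  have hKT : (M ／ S).IsBasis' (K \ S) T := by
    have h := hK.contract_isBasis' hJ (hK.indep.subset (Set.union_subset Set.sdiff_subset hJK))
    rwa [Set.union_sdiff_right, hTS.sdiff_eq_left] at h
  have hKS : J = K ∩ S :=
    hJ.eq_of_subset_indep (hK.indep.subset Set.inter_subset_left)
      (Set.subset_inter hJK hJ.subset) Set.inter_subset_right
  have h := Set.encard_sdiff_add_encard_inter K S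
  rw [hKT.encard_eq_eRk, ← hKS, hJ.encard_eq_eRk, hK.encard_eq_eRk, ← contract_eq_contract,
    ← cast_rk_eq, ← cast_rk_eq, ← cast_rk_eq] at h
  exact_mod_cast h

lemma rank_contract_add_rk (hS : S ⊆ M.E) : rank (M ⧸ S) + rk M S = rank M := by
  rw [rank, rank, ← Set.sdiff_union_of_subset hS]
  exact rk_contract_add_rk Set.disjoint_sdiff_left

lemma rk_insert_of_mem_closure {e : α} (he : e ∈ M.closure T) :
    rk M (insert e T) = rk M T := by
  have h := M.eRk_insert_closure_eq e T
  rw [Set.insert_eq_of_mem he, eRk_closure_eq, ← cast_rk_eq, ← cast_rk_eq] at h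
  exact_mod_cast h.symm

lemma isFlat_iff_forall_rk_insert (hS : S ⊆ M.E) :
    M.IsFlat S ↔ ∀ e ∈ M.E \ S, rk M (insert e S) = rk M S + 1 := by
  rw [isFlat_iff_closure_eq, ← (M.subset_closure S hS).ge_iff_eq']
  constructor
  · intro hcl e he
    have h := eRk_insert_eq_add_one (M := M) (X := S) ⟨he.1, fun h => he.2 (hcl h)⟩
    rw [← cast_rk_eq, ← cast_rk_eq] at h
    exact_mod_cast h
  · intro h e he
    by_contra heS
    have := h e ⟨M.closure_subset_ground S he, heS⟩
    rw [rk_insert_of_mem_closure he] at this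
    omega

lemma coe_subset_ground_of_mem_powerset {S : Finset α}
    (hS : S ∈ M.E.toFinite.toFinset.powerset) : (S : Set α) ⊆ M.E :=
  Set.Finite.subset_toFinset.1 (Finset.mem_powerset.1 hS)

open scoped Classical in
noncomputable def numFlats (M : Matroid α) (k : ℕ) : ℕ :=
  (M.E.toFinite.toFinset.powerset.filter fun S : Finset α => M.IsFlat S ∧ rk M S = k).card

end Rank

section KazhdanLusztig

open scoped Classical

variable [Fintype α] {P Z : Matroid α → ℤ[X]} (hPZ : PZaxioms P Z)
include hPZ

lemma coeff_Z (M : Matroid α) (j : ℕ) :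
    (Z M).coeff j = ∑ S ∈ M.E.toFinite.toFinset.powerset,
      if rk M S ≤ j then (P (M ⧸ (S : Set α))).coeff (j - rk M S) else 0 := by
  rw [hPZ.2.2.2 M, finsetSum_coeff]
  refine Finset.sum_congr rfl fun S _ => ?_
  rw [mul_comm, coeff_mul_X_pow']

lemma coeff_P_eq_zero_of_rank_le {j : ℕ} (hE : M.E.Nonempty) (hj : rank M ≤ 2 * j) :
    (P M).coeff j = 0 := by
  rcases hPZ.2.1 M hE.ne_empty with h | h
  · rw [h, coeff_zero]
  · exact coeff_eq_zero_of_natDegree_lt (by omega)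

lemma coeff_Z_rank (M : Matroid α) : (Z M).coeff (rank M) = 1 := by
  rw [coeff_Z hPZ, Finset.sum_eq_single_of_mem _ (Finset.mem_powerset_self _)]
  · rw [Set.Finite.coe_toFinset, ← rank, if_pos le_rfl, Nat.sub_self,
      (hPZ.1 _ Set.sdiff_self).1, coeff_one_zero]
  · intro S hS hSE
    have hne : (M ⧸ (S : Set α)).E.Nonempty := Set.sdiff_nonempty.2 fun hES =>
      hSE (Finset.Subset.antisymm (Finset.mem_powerset.1 hS) (Set.Finite.toFinset_subset.2 hES))
    have := rank_contract_add_rk (coe_subset_ground_of_mem_powerset hS)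
    split_ifs
    · exact coeff_P_eq_zero_of_rank_le hPZ hne (by omega)
    · rfl

lemma coeff_Z_zero (M : Matroid α) : (Z M).coeff 0 = 1 := by
  rw [(hPZ.2.2.1 M).2 0 (Nat.zero_le _), Nat.sub_zero, coeff_Z_rank hPZ]

lemma coeff_P_zero (M : Matroid α) : (P M).coeff 0 = if M.Loopless then 1 else 0 := by
  induction hn : M.E.ncard using Nat.strong_induction_on generalizing M with
  | _ n ih =>
  set L := M.loops.toFinite.toFinset
  have hterm : ∀ S ∈ M.E.toFinite.toFinset.powerset.erase ∅,
      (if rk M S ≤ 0 then (P (M ⧸ (S : Set α))).coeff (0 - rk M S) else 0) =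
        if S = L then 1 else 0 := by
    intro S hS
    obtain ⟨hS_ne, hS⟩ := Finset.mem_erase.1 hS
    have hSE := coe_subset_ground_of_mem_powerset hS
    have hS_eq : S = L ↔ M.loops ⊆ S ∧ (S : Set α) ⊆ M.loops := by
      rw [← Finset.coe_inj, Set.Finite.coe_toFinset, Set.Subset.antisymm_iff, and_comm]
    by_cases hrk : rk M S = 0
    · have hS_loops : (S : Set α) ⊆ M.loops := by
        rwa [rk_eq_zero_iff, Set.inter_eq_self_of_subset_left hSE] at hrk
      obtain ⟨e, he⟩ := Finset.nonempty_iff_ne_empty.2 hS_ne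
      have hlt : (M ⧸ (S : Set α)).E.ncard < n :=
        hn ▸ Set.ncard_lt_ncard (Set.sdiff_ssubset_left_iff.2 ⟨e, hSE he, he⟩)
      rw [if_pos hrk.le, hrk, ih _ hlt _ rfl, loopless_contract_iff_loops_subset hS_loops]
      simp only [hS_eq, hS_loops, and_true]
    · rw [if_neg (by omega), if_neg fun h =>
        hrk (rk_eq_zero_iff.2 (Set.inter_subset_left.trans (hS_eq.1 h).2))]
  have hsum := coeff_Z_zero hPZ M
  rw [coeff_Z hPZ, ← Finset.add_sum_erase _ _ (Finset.empty_mem_powerset _),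
    Finset.sum_congr rfl hterm, Finset.sum_ite_eq', Finset.coe_empty, contract_eq_contract,
    contract_empty, rk_empty, if_pos le_rfl] at hsum
  have hL : L ∈ M.E.toFinite.toFinset.powerset :=
    Finset.mem_powerset.2 (Set.Finite.toFinset_subset_toFinset.2 M.loops_subset_ground)
  have hloopless : M.Loopless ↔ L = ∅ := by rw [loopless_iff, Set.Finite.toFinset_eq_empty]
  simp only [Nat.sub_zero, Finset.mem_erase, hL, and_true] at hsum
  rw [hloopless]
  split_ifs at hsum ⊢ <;> simp_all

lemma coeff_Z_eq_sum_add_numFlats (M : Matroid α) (j : ℕ) :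
    (Z M).coeff j = (∑ S ∈ M.E.toFinite.toFinset.powerset.filter
      (fun S : Finset α => rk M S < j), (P (M ⧸ (S : Set α))).coeff (j - rk M S)) +
      numFlats M j := by
  have hterm : ∀ S ∈ M.E.toFinite.toFinset.powerset,
      (if rk M S ≤ j then (P (M ⧸ (S : Set α))).coeff (j - rk M S) else 0) =
        (if rk M S < j then (P (M ⧸ (S : Set α))).coeff (j - rk M S) else 0) +
          if M.IsFlat S ∧ rk M S = j then 1 else 0 := by
    intro S hS
    rcases lt_trichotomy (rk M S) j with h | rfl | h
    · simp [h, h.le, h.ne]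
    · rw [if_pos le_rfl, if_neg (lt_irrefl _), Nat.sub_self, coeff_P_zero hPZ,
        loopless_contract_iff_isFlat (coe_subset_ground_of_mem_powerset hS)]
      simp
    · simp [h.not_ge, h.not_gt, h.ne']
  rw [coeff_Z hPZ, Finset.sum_congr rfl hterm, Finset.sum_add_distrib, Finset.sum_filter,
    Finset.sum_boole, numFlats]

lemma coeff_Z_rank_sub_one (M : Matroid α) :
    (Z M).coeff (rank M - 1) = numFlats M (rank M - 1) := by
  rw [coeff_Z_eq_sum_add_numFlats hPZ, Finset.sum_eq_zero, zero_add]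
  intro S hS
  obtain ⟨hS, hlt⟩ := Finset.mem_filter.1 hS
  have hrank := rank_contract_add_rk (coe_subset_ground_of_mem_powerset hS)
  refine coeff_P_eq_zero_of_rank_le hPZ (Set.sdiff_nonempty.2 fun hES => ?_) (by omega)
  have : rank M ≤ rk M S := rk_mono hES
  omega

lemma coeff_Z_one (M : Matroid α) [M.Loopless] :
    (Z M).coeff 1 = (P M).coeff 1 + numFlats M 1 := by
  have hrk : M.E.toFinite.toFinset.powerset.filter (fun S : Finset α => rk M S < 1) = {∅} := by
    ext S
    simp only [Finset.mem_filter, Finset.mem_singleton, Nat.lt_one_iff, rk_eq_zero_iff,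
      loops_eq_empty, Set.subset_empty_iff]
    constructor
    · rintro ⟨hS, h⟩
      rw [Set.inter_eq_self_of_subset_left (coe_subset_ground_of_mem_powerset hS)] at h
      exact_mod_cast h
    · rintro rfl
      simp
  rw [coeff_Z_eq_sum_add_numFlats hPZ, hrk, Finset.sum_singleton, Finset.coe_empty, rk_empty,
    contract_eq_contract, contract_empty]

theorem P_eq_of_loopless_of_rank_le_four (M : Matroid α) [M.Loopless] (h3 : 3 ≤ rank M)
    (h4 : rank M ≤ 4) : P M = 1 + C ((numFlats M (rank M - 1) : ℤ) - numFlats M 1) * X := by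
  have hc0 : (P M).coeff 0 = 1 := by rw [coeff_P_zero hPZ, if_pos ‹_›]
  have hc1 : (P M).coeff 1 = numFlats M (rank M - 1) - numFlats M 1 := by
    have hpal := (hPZ.2.2.1 M).2 1 (by omega)
    rw [coeff_Z_one hPZ, coeff_Z_rank_sub_one hPZ] at hpal
    linarith
  have hE : M.E ≠ ∅ := fun hE => by
    have : rank M = 0 := by rw [rank, hE, rk_empty]
    omega
  have hdeg : (P M).natDegree ≤ 1 := by
    rcases hPZ.2.1 M hE with h | h
    · simp [h]
    · omega
  rw [eq_X_add_C_of_natDegree_le_one hdeg, hc0, hc1, map_one]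
  ring

end KazhdanLusztig

section Vamos

def vamosNonbases : Finset (Finset (Fin 8)) :=
  {{0, 1, 2, 3}, {0, 1, 4, 5}, {2, 3, 4, 5}, {2, 3, 6, 7}, {4, 5, 6, 7}}

abbrev vamosIndep (i : Finset (Fin 8)) : Prop :=
  i.card ≤ 3 ∨ (i.card = 4 ∧ i ∉ vamosNonbases)

def vamosRk (s : Finset (Fin 8)) : ℕ :=
  if s.card ≤ 3 then s.card else if s ∈ vamosNonbases then 3 else 4

abbrev vamosFlat (s : Finset (Fin 8)) : Prop :=
  ∀ e ∉ s, vamosRk (insert e s) = vamosRk s + 1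

set_option maxRecDepth 40000

lemma vamosIndep_exists_superset : ∀ i : Finset (Fin 8), vamosIndep i →
    ∃ b : Finset (Fin 8), (b.card = 4 ∧ b ∉ vamosNonbases) ∧ i ⊆ b := by
  decide

lemma vamosRk_spec : ∀ s : Finset (Fin 8), (∀ i ⊆ s, vamosIndep i → i.card ≤ vamosRk s) ∧
    ∃ i ⊆ s, vamosIndep i ∧ i.card = vamosRk s := by
  decide

variable {V : Matroid (Fin 8)}
  (hVB : ∀ B : Set (Fin 8), V.IsBase B ↔ B.ncard = 4 ∧
    B ∉ ({{0, 1, 2, 3}, {0, 1, 4, 5}, {2, 3, 4, 5}, {2, 3, 6, 7}, {4, 5, 6, 7}} :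
      Set (Set (Fin 8))))
include hVB

lemma vamos_isBase_coe_iff (b : Finset (Fin 8)) :
    V.IsBase b ↔ b.card = 4 ∧ b ∉ vamosNonbases := by
  rw [hVB, Set.ncard_coe_finset]
  simp only [vamosNonbases, Set.mem_insert_iff, Set.mem_singleton_iff, Finset.mem_insert,
    Finset.mem_singleton]
  simp only [← Finset.coe_insert, ← Finset.coe_singleton, Finset.coe_inj]

lemma vamos_indep_coe_iff (i : Finset (Fin 8)) : V.Indep i ↔ vamosIndep i := by
  rw [indep_iff]
  constructor
  · rintro ⟨B, hB, hiB⟩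
    obtain ⟨b, rfl⟩ := (Set.toFinite B).exists_finset_coe
    rw [vamos_isBase_coe_iff hVB] at hB
    have hib : i ⊆ b := by exact_mod_cast hiB
    rcases (Finset.card_le_card hib).lt_or_eq with h | h
    · exact Or.inl (by omega)
    · exact Or.inr ⟨by omega, Finset.eq_of_subset_of_card_le hib h.ge ▸ hB.2⟩
  · intro h
    obtain ⟨b, hb, hib⟩ := vamosIndep_exists_superset i h
    exact ⟨b, (vamos_isBase_coe_iff hVB b).2 hb, by exact_mod_cast hib⟩

lemma vamos_rk_coe (s : Finset (Fin 8)) : rk V s = vamosRk s := by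
  rw [← Nat.cast_inj (R := ℕ∞), cast_rk_eq]
  obtain ⟨hle, i, his, hi, hcard⟩ := vamosRk_spec s
  refine le_antisymm (eRk_le_iff.2 fun I hIs hI => ?_) ?_
  · obtain ⟨j, rfl⟩ := (Set.toFinite I).exists_finset_coe
    rw [vamos_indep_coe_iff hVB] at hI
    rw [Set.encard_coe_eq_coe_finsetCard]
    exact_mod_cast hle j (by exact_mod_cast hIs) hI
  · exact le_eRk_iff.2 ⟨i, by exact_mod_cast his, (vamos_indep_coe_iff hVB i).2 hi,
      by rw [Set.encard_coe_eq_coe_finsetCard, hcard]⟩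

lemma vamos_loopless : V.Loopless :=
  loopless_iff_forall_isNonloop.2 fun e _ => indep_singleton.1 <| by
    rw [← Finset.coe_singleton, vamos_indep_coe_iff hVB]
    exact Or.inl (by simp)

variable (hVE : V.E = Set.univ)
include hVE

lemma vamos_rank : rank V = 4 := by
  rw [rank, hVE, ← Finset.coe_univ, vamos_rk_coe hVB]
  rfl

lemma vamos_numFlats (k : ℕ) :
    numFlats V k = (Finset.univ.filter fun s => vamosFlat s ∧ vamosRk s = k).card := by
  classical
  have hE : V.E.toFinite.toFinset = Finset.univ := by simp [hVE]
  have hflat (s : Finset (Fin 8)) : V.IsFlat s ↔ vamosFlat s := by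
    rw [isFlat_iff_forall_rk_insert (hVE ▸ Set.subset_univ _), hVE]
    simp only [Set.mem_sdiff, Set.mem_univ, true_and, Finset.mem_coe, ← Finset.coe_insert,
      vamos_rk_coe hVB]
  rw [numFlats, hE, Finset.powerset_univ]
  exact congrArg Finset.card (Finset.filter_congr fun s _ => by rw [hflat, vamos_rk_coe hVB])

end Vamos

/-- The ground set `{1,…,8}` is represented by `Fin 8`, with `i` corresponding to `i - 1`. -/
theorem vamos_KL_polynomial
    (P Z : Matroid (Fin 8) → Polynomial ℤ) (hPZ : PZaxioms P Z)
    (V : Matroid (Fin 8)) (hVE : V.E = Set.univ)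
    (hVB : ∀ B : Set (Fin 8), V.IsBase B ↔ B.ncard = 4 ∧
        B ∉ ({{0, 1, 2, 3}, {0, 1, 4, 5}, {2, 3, 4, 5}, {2, 3, 6, 7}, {4, 5, 6, 7}} :
          Set (Set (Fin 8)))) :
    P V = 1 + C 33 * X := by
  have := vamos_loopless hVB
  have hrank := vamos_rank hVB hVE
  have hpoints : numFlats V 1 = 8 := by rw [vamos_numFlats hVB hVE]; decide
  have hplanes : numFlats V 3 = 41 := by rw [vamos_numFlats hVB hVE]; decide
  rw [P_eq_of_loopless_of_rank_le_four hPZ V (by omega) (by omega), hrank, hpoints, hplanes]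
  norm_num

end KLPaper
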